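/- Let m ≥ 0 be an integer and r0 > 0 a real number. Then |I_2(m, r0)| ≤ exp(r0²/(2m+3)) − 1. -/

import Mathlib

open Real

/-- `I₂(m, r₀)` from the paper. -/
noncomputable def I2 (m : ℕ) (r0 : ℝ) : ℝ :=
  ∑' k : ℕ,
    (-1 : ℝ) ^ (k + 1) * (r0 / 2) ^ (2 * (k + 1)) *
      ((2 * (m : ℝ) + 3) / (2 * (m : ℝ) + 2 * ((k : ℝ) + 1) + 3)) *
      ∑ p ∈ Finset.HasAntidiagonal.antidiagonal (k + 1),
        Real.Gamma ((m : ℝ) + 3 / 2) ^ 2 /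
          ((Nat.factorial p.1 : ℝ) * (Nat.factorial p.2 : ℝ) *
            Real.Gamma ((m : ℝ) + (p.1 : ℝ) + 3 / 2) * Real.Gamma ((m : ℝ) + (p.2 : ℝ) + 3 / 2))

/-!
Put `a = m + 3/2`. Since `Γ(a + p) ≥ Γ(a) aᵖ`, the inner sum over `k₁ + k₂ = k` is at most
`a⁻ᵏ ∑ 1/(k₁! k₂!) = (2/a)ᵏ / k!`. Dropping the factor `(2m+3)/(2m+2k+3) ≤ 1`, the `k`-th term
of `I₂` is bounded in absolute value by `xᵏ / k!` with `x = r₀²/(2m+3)`, and these bounds sum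
over `k ≥ 1` to `exp x - 1`.
-/

open Finset Nat

theorem Real.Gamma_mul_pow_le_Gamma_add_nat {a : ℝ} (ha : 0 < a) (n : ℕ) :
    Gamma a * a ^ n ≤ Gamma (a + n) := by
  induction n with
  | zero => simp
  | succ n ih =>
    rw [Nat.cast_succ, ← add_assoc, Gamma_add_one (by positivity), pow_succ]
    calc Gamma a * (a ^ n * a) = a * (Gamma a * a ^ n) := by ring
      _ ≤ (a + n) * Gamma (a + n) := by gcongr; exact le_add_of_nonneg_right n.cast_nonneg

theorem Real.Gamma_sq_div_factorial_mul_Gamma_add_nat_le {a : ℝ} (ha : 0 < a) (i j : ℕ) :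
    Gamma a ^ 2 / (i ! * j ! * Gamma (a + i) * Gamma (a + j)) ≤ a⁻¹ ^ (i + j) / (i ! * j !) := by
  calc Gamma a ^ 2 / (i ! * j ! * Gamma (a + i) * Gamma (a + j))
      ≤ Gamma a ^ 2 / (i ! * j ! * (Gamma a * a ^ i) * (Gamma a * a ^ j)) := by
        gcongr <;> exact Gamma_mul_pow_le_Gamma_add_nat ha _
    _ = a⁻¹ ^ (i + j) / (i ! * j !) := by
        have := (Gamma_pos_of_pos ha).ne'
        rw [inv_pow, pow_add]
        field_simp

theorem sum_antidiagonal_inv_factorial_mul (n : ℕ) :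
    ∑ p ∈ antidiagonal n, ((p.1 ! : ℝ) * p.2 !)⁻¹ = 2 ^ n / n ! := by
  calc ∑ p ∈ antidiagonal n, ((p.1 ! : ℝ) * p.2 !)⁻¹
      = ∑ p ∈ antidiagonal n, (n.choose p.1 : ℝ) / n ! := by
        refine sum_congr rfl fun p hp => ?_
        rw [← mem_antidiagonal.mp hp, Nat.cast_add_choose]
        field_simp
    _ = 2 ^ n / n ! := by
        rw [← sum_div, Nat.sum_antidiagonal_eq_sum_range_succ_mk]
        exact_mod_cast congrArg (fun s : ℕ => (s : ℝ) / n !) (Nat.sum_range_choose n)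

theorem Real.hasSum_pow_succ_div_factorial (x : ℝ) :
    HasSum (fun k : ℕ => x ^ (k + 1) / (k + 1)!) (exp x - 1) := by
  have := (hasSum_nat_add_iff' 1).mpr (NormedSpace.expSeries_div_hasSum_exp x)
  simpa [← exp_eq_exp_ℝ] using this

noncomputable def gammaConvolution (a : ℝ) (n : ℕ) : ℝ :=
  ∑ p ∈ antidiagonal n, Gamma a ^ 2 / (p.1 ! * p.2 ! * Gamma (a + p.1) * Gamma (a + p.2))

theorem gammaConvolution_nonneg {a : ℝ} (ha : 0 < a) (n : ℕ) : 0 ≤ gammaConvolution a n :=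
  sum_nonneg fun p _ => by positivity

theorem gammaConvolution_le {a : ℝ} (ha : 0 < a) (n : ℕ) :
    gammaConvolution a n ≤ (2 / a) ^ n / n ! := by
  calc gammaConvolution a n ≤ ∑ p ∈ antidiagonal n, a⁻¹ ^ n * ((p.1 ! : ℝ) * p.2 !)⁻¹ :=
        sum_le_sum fun p hp => by
          rw [← mem_antidiagonal.mp hp, ← div_eq_mul_inv]
          exact Gamma_sq_div_factorial_mul_Gamma_add_nat_le ha _ _
    _ = (2 / a) ^ n / n ! := by
        rw [← mul_sum, sum_antidiagonal_inv_factorial_mul, div_eq_inv_mul 2, mul_pow]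
        ring

theorem abs_neg_one_pow_mul_gammaConvolution_le {a y : ℝ} (ha : 0 < a) (hy : 0 ≤ y) (n : ℕ) :
    |(-1) ^ n * y ^ n * (a / (a + n)) * gammaConvolution a n| ≤ (2 * y / a) ^ n / n ! := by
  have hρ : a / (a + n) ≤ 1 := div_le_one_of_le₀ (by simp) (by positivity)
  rw [abs_mul, abs_mul, abs_mul, abs_neg_one_pow, abs_of_nonneg (by positivity),
    abs_of_nonneg (by positivity), abs_of_nonneg (gammaConvolution_nonneg ha n)]
  calc 1 * y ^ n * (a / (a + n)) * gammaConvolution a n ≤ y ^ n * 1 * ((2 / a) ^ n / n !) := by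
        rw [one_mul]
        gcongr
        exacts [gammaConvolution_nonneg ha n, gammaConvolution_le ha n]
    _ = (2 * y / a) ^ n / n ! := by ring

theorem I2_eq_tsum (m : ℕ) (r0 : ℝ) :
    I2 m r0 = ∑' k : ℕ, (-1) ^ (k + 1) * (r0 ^ 2 / 4) ^ (k + 1) *
      ((m + 3 / 2) / (m + 3 / 2 + (k + 1 : ℕ))) * gammaConvolution (m + 3 / 2) (k + 1) := by
  refine tsum_congr fun k => ?_
  congr 1
  · congr 1
    · rw [pow_mul, div_pow]
      norm_num
    · push_cast
      field_simp
      ring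
  · refine sum_congr rfl fun p _ => ?_
    simp only [add_right_comm _ _ (3 / 2 : ℝ)]

theorem abs_I2_le_general (m : ℕ) (r0 : ℝ) :
    |I2 m r0| ≤ Real.exp (r0 ^ 2 / (2 * (m : ℝ) + 3)) - 1 := by
  have ha : (0 : ℝ) < m + 3 / 2 := by positivity
  have hx : r0 ^ 2 / (2 * (m : ℝ) + 3) = 2 * (r0 ^ 2 / 4) / (m + 3 / 2) := by
    field_simp
    ring
  rw [I2_eq_tsum, hx]
  exact tsum_of_norm_bounded (hasSum_pow_succ_div_factorial _) fun k =>
    (norm_eq_abs _).trans_le <|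
      abs_neg_one_pow_mul_gammaConvolution_le ha (y := r0 ^ 2 / 4) (by positivity) (k + 1)

theorem abs_I2_le (m : ℕ) (r0 : ℝ) (hr0 : 0 < r0) :
    |I2 m r0| ≤ Real.exp (r0 ^ 2 / (2 * (m : ℝ) + 3)) - 1 :=
  abs_I2_le_general m r0
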